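/- arXiv:1706.04866 — 2 statements merged into one kernel-verified Lean document; each statement's English description precedes it below -/
import Mathlib

section
/- Let H be a complex Hilbert space, let ψ, κ ∈ H, let (v_j)_{j∈ℕ} be a family of vectors in H with ∑_j ‖v_j‖² ≤ 2 Re⟨ψ, κ⟩, and let (α_j)_{j∈ℕ} be complex numbers with c := ∑_j |α_j|² < ∞. Then the series ∑_j \overline{α_j} v_j converges in H and ‖∑_j \overline{α_j} v_j‖² ≤ (1/2) ‖κ + c·ψ‖². -/
open scoped InnerProductSpace

/-- Let `H` be a complex Hilbert space, `ψ, κ ∈ H`, and let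
`(v j)` satisfy the dissipativity bound `∑ ‖v j‖² ≤ 2 Re ⟨ψ, κ⟫`. If
`(α j)` are complex numbers with `c = ∑ |α j|² < ∞`, then the series
`∑ conj (α j) • v j` converges in `H` and
`‖∑ conj (α j) • v j‖² ≤ (1/2) ‖κ + c • ψ‖²`. -/
theorem dissipative_perturbation_sq_bound
    {H : Type*} [NormedAddCommGroup H] [InnerProductSpace ℂ H] [CompleteSpace H]
    (ψ κ : H) (v : ℕ → H) (α : ℕ → ℂ)
    (hv : Summable fun j => ‖v j‖ ^ 2)
    (hdiss : ∑' j, ‖v j‖ ^ 2 ≤ 2 * (⟪ψ, κ⟫_ℂ).re)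
    (hα : Summable fun j => ‖α j‖ ^ 2) :
    Summable (fun j => (starRingEnd ℂ) (α j) • v j) ∧
    ‖∑' j, (starRingEnd ℂ) (α j) • v j‖ ^ 2 ≤
      (1 / 2) * ‖κ + (((∑' j, ‖α j‖ ^ 2 : ℝ) : ℂ)) • ψ‖ ^ 2 := by
  set c : ℝ := ∑' j, ‖α j‖ ^ 2 with hc
  set T : ℝ := ∑' j, ‖v j‖ ^ 2 with hT
  have hc0 : 0 ≤ c := tsum_nonneg fun j => by positivity
  have hT0 : 0 ≤ T := tsum_nonneg fun j => by positivity
  have hnormterm : ∀ j, ‖(starRingEnd ℂ) (α j) • v j‖ = ‖α j‖ * ‖v j‖ := by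
    intro j; rw [norm_smul, RCLike.norm_conj]
  -- summability of the norms
  have hab : Summable (fun j => ‖α j‖ * ‖v j‖) := by
    refine Summable.of_nonneg_of_le (fun j => by positivity) (fun j => ?_)
      (((hα.add hv).div_const 2))
    have h := sq_nonneg (‖α j‖ - ‖v j‖)
    nlinarith
  have hsum : Summable (fun j => (starRingEnd ℂ) (α j) • v j) := by
    refine Summable.of_norm ?_
    simpa only [hnormterm] using hab
  refine ⟨hsum, ?_⟩
  -- Cauchy-Schwarz for the series
  have hCS : (∑' j, ‖α j‖ * ‖v j‖) ^ 2 ≤ c * T := by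
    have hle : ∑' j, ‖α j‖ * ‖v j‖ ≤ Real.sqrt (c * T) := by
      refine Summable.tsum_le_of_sum_le hab fun s => ?_
      have h1 : (∑ j ∈ s, ‖α j‖ * ‖v j‖) ^ 2 ≤
          (∑ j ∈ s, ‖α j‖ ^ 2) * (∑ j ∈ s, ‖v j‖ ^ 2) :=
        Finset.sum_mul_sq_le_sq_mul_sq s _ _
      have h2 : (∑ j ∈ s, ‖α j‖ ^ 2) ≤ c := Summable.sum_le_tsum s (fun j _ => by positivity) hα
      have h3 : (∑ j ∈ s, ‖v j‖ ^ 2) ≤ T := Summable.sum_le_tsum s (fun j _ => by positivity) hv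
      have hs2 : (∑ j ∈ s, ‖v j‖ ^ 2) ≥ 0 := Finset.sum_nonneg fun j _ => by positivity
      have h4 : (∑ j ∈ s, ‖α j‖ * ‖v j‖) ^ 2 ≤ c * T := by nlinarith
      have h5 : (0:ℝ) ≤ ∑ j ∈ s, ‖α j‖ * ‖v j‖ :=
        Finset.sum_nonneg fun j _ => by positivity
      nlinarith [Real.sq_sqrt (mul_nonneg hc0 hT0), Real.sqrt_nonneg (c*T)]
    have h0 : (0:ℝ) ≤ ∑' j, ‖α j‖ * ‖v j‖ := tsum_nonneg fun j => by positivity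
    nlinarith [Real.sq_sqrt (mul_nonneg hc0 hT0), Real.sqrt_nonneg (c*T)]
  have hnw : ‖∑' j, (starRingEnd ℂ) (α j) • v j‖ ≤ ∑' j, ‖α j‖ * ‖v j‖ := by
    calc ‖∑' j, (starRingEnd ℂ) (α j) • v j‖ ≤ ∑' j, ‖(starRingEnd ℂ) (α j) • v j‖ :=
          norm_tsum_le_tsum_norm (by simpa only [hnormterm] using hab)
      _ = ∑' j, ‖α j‖ * ‖v j‖ := by simp only [hnormterm]
  have hw0 : (0:ℝ) ≤ ‖∑' j, (starRingEnd ℂ) (α j) • v j‖ := norm_nonneg _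
  have hab0 : (0:ℝ) ≤ ∑' j, ‖α j‖ * ‖v j‖ := tsum_nonneg fun j => by positivity
  have hw2 : ‖∑' j, (starRingEnd ℂ) (α j) • v j‖ ^ 2 ≤ c * (2 * (⟪ψ, κ⟫_ℂ).re) := by
    have : ‖∑' j, (starRingEnd ℂ) (α j) • v j‖ ^ 2 ≤ (∑' j, ‖α j‖ * ‖v j‖) ^ 2 := by
      nlinarith
    nlinarith
  -- expand the right-hand side
  have hexp : ‖κ + ((c : ℂ)) • ψ‖ ^ 2 =
      ‖κ‖ ^ 2 + 2 * (c * (⟪ψ, κ⟫_ℂ).re) + c ^ 2 * ‖ψ‖ ^ 2 := by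
    rw [norm_add_sq (𝕜 := ℂ)]
    have h1 : RCLike.re ⟪κ, ((c : ℂ)) • ψ⟫_ℂ = c * (⟪ψ, κ⟫_ℂ).re := by
      rw [inner_smul_right, ← inner_conj_symm ψ κ]
      simp [RCLike.re_to_complex, Complex.mul_re]
      exact Or.inl (by simpa using inner_re_symm (𝕜 := ℂ) κ ψ)
    have h2 : ‖((c : ℂ)) • ψ‖ = c * ‖ψ‖ := by
      rw [norm_smul, Complex.norm_real, Real.norm_of_nonneg hc0]
    rw [h1, h2]; ring
  rw [hexp]
  have hre : (⟪ψ, κ⟫_ℂ).re ≤ ‖ψ‖ * ‖κ‖ := by simpa using re_inner_le_norm (𝕜 := ℂ) ψ κ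
  nlinarith [sq_nonneg (c * ‖ψ‖ - ‖κ‖), mul_le_mul_of_nonneg_left hre hc0]
end

section
/- Let H be a complex Hilbert space, let ψ, κ ∈ H, let (v_j)_{j∈ℕ} be a family of vectors in H with ∑_j ‖v_j‖² ≤ 2 Re⟨ψ, κ⟩, and let (α_j)_{j∈ℕ} be complex numbers with c := ∑_j |α_j|² < ∞. Then ‖∑_j \overline{α_j} v_j‖ ≤ (1/√2) ‖κ + (c/2)·ψ‖ + (c/(2√2)) ‖ψ‖. -/
/-!
By Cauchy–Schwarz, `‖∑ conj αⱼ vⱼ‖² ≤ c ∑ ‖vⱼ‖²`. Writing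
`Re⟨ψ, κ⟩ = Re⟨ψ, κ + (c/2)ψ⟩ - (c/2)‖ψ‖²`, the dissipativity bound gives
`∑ ‖vⱼ‖² ≤ 2‖ψ‖b - c‖ψ‖²` with `b = ‖κ + (c/2)ψ‖`, and
`c (2‖ψ‖b - c‖ψ‖²) ≤ (b + c‖ψ‖/2)² / 2` amounts to `(b - 3c‖ψ‖/2)² ≥ 0`.
-/

open scoped InnerProductSpace

theorem Real.summable_and_tsum_mul_le_sqrt_mul_sqrt {ι : Type*} {f g : ι → ℝ}
    (hf : ∀ i, 0 ≤ f i) (hg : ∀ i, 0 ≤ g i)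
    (hf_sum : Summable fun i => f i ^ 2) (hg_sum : Summable fun i => g i ^ 2) :
    (Summable fun i => f i * g i) ∧
      ∑' i, f i * g i ≤ √(∑' i, f i ^ 2) * √(∑' i, g i ^ 2) := by
  simp only [← Real.rpow_two] at hf_sum hg_sum
  simpa only [Real.rpow_two, ← Real.sqrt_eq_rpow] using
    Real.summable_and_inner_le_Lp_mul_Lq_tsum_of_nonneg .two_two hf hg hf_sum hg_sum

theorem summable_smul_and_norm_tsum_smul_le {ι 𝕜 E : Type*} [NormedField 𝕜]
    [NormedAddCommGroup E] [NormedSpace 𝕜 E] [CompleteSpace E] {a : ι → 𝕜} {v : ι → E}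
    (ha : Summable fun i => ‖a i‖ ^ 2) (hv : Summable fun i => ‖v i‖ ^ 2) :
    (Summable fun i => a i • v i) ∧
      ‖∑' i, a i • v i‖ ≤ √(∑' i, ‖a i‖ ^ 2) * √(∑' i, ‖v i‖ ^ 2) := by
  obtain ⟨hsum, hle⟩ := Real.summable_and_tsum_mul_le_sqrt_mul_sqrt
    (fun i => norm_nonneg (a i)) (fun i => norm_nonneg (v i)) ha hv
  simp only [← norm_smul] at hsum hle
  exact ⟨hsum.of_norm, (norm_tsum_le_tsum_norm hsum).trans hle⟩

theorem re_inner_le_norm_mul_norm_add_smul_sub {𝕜 E : Type*} [RCLike 𝕜]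
    [NormedAddCommGroup E] [InnerProductSpace 𝕜 E] (ψ κ : E) (t : ℝ) :
    RCLike.re ⟪ψ, κ⟫_𝕜 ≤ ‖ψ‖ * ‖κ + (t : 𝕜) • ψ‖ - t * ‖ψ‖ ^ 2 := by
  have hshift : RCLike.re ⟪ψ, κ + (t : 𝕜) • ψ⟫_𝕜 = RCLike.re ⟪ψ, κ⟫_𝕜 + t * ‖ψ‖ ^ 2 := by
    rw [inner_add_right, inner_smul_right, inner_self_eq_norm_sq_to_K, map_add,
      ← RCLike.ofReal_pow, RCLike.re_ofReal_mul, RCLike.ofReal_re]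
  have hcs : RCLike.re ⟪ψ, κ + (t : 𝕜) • ψ⟫_𝕜 ≤ ‖ψ‖ * ‖κ + (t : 𝕜) • ψ‖ :=
    (RCLike.re_le_norm _).trans (norm_inner_le_norm _ _)
  linarith

theorem sqrt_mul_sqrt_le_of_le_two_mul_mul_sub {b c d p : ℝ}
    (hb : 0 ≤ b) (hc : 0 ≤ c) (hp : 0 ≤ p) (hd : d ≤ 2 * p * b - c * p ^ 2) :
    √c * √d ≤ 1 / √2 * b + c / (2 * √2) * p := by
  have hrhs : 1 / √2 * b + c / (2 * √2) * p = (b + c * p / 2) / √2 := by ring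
  rw [← Real.sqrt_mul hc, hrhs, Real.sqrt_le_iff, div_pow, Real.sq_sqrt zero_le_two]
  refine ⟨by positivity, ?_⟩
  nlinarith [mul_le_mul_of_nonneg_left hd hc, sq_nonneg (b - 3 * c * p / 2)]

/-- Let `H` be a complex Hilbert space, `ψ, κ ∈ H`, and let
`(v j)` satisfy the dissipativity bound `∑ ‖v j‖² ≤ 2 Re ⟨ψ, κ⟩`. If
`(α j)` are complex numbers with `c = ∑ |α j|² < ∞`, then
`‖∑ conj (α j) • v j‖ ≤ (1/√2) ‖κ + (c/2) • ψ‖ + (c/(2√2)) ‖ψ‖`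
(the series converging in `H`). -/
theorem dissipative_perturbation_relative_bound
    {H : Type*} [NormedAddCommGroup H] [InnerProductSpace ℂ H] [CompleteSpace H]
    (ψ κ : H) (v : ℕ → H) (α : ℕ → ℂ)
    (hv : Summable fun j => ‖v j‖ ^ 2)
    (hdiss : ∑' j, ‖v j‖ ^ 2 ≤ 2 * (⟪ψ, κ⟫_ℂ).re)
    (hα : Summable fun j => ‖α j‖ ^ 2) :
    Summable (fun j => (starRingEnd ℂ) (α j) • v j) ∧
    ‖∑' j, (starRingEnd ℂ) (α j) • v j‖ ≤
      (1 / Real.sqrt 2) * ‖κ + ((((∑' j, ‖α j‖ ^ 2 : ℝ) / 2 : ℝ) : ℂ)) • ψ‖ +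
        ((∑' j, ‖α j‖ ^ 2 : ℝ) / (2 * Real.sqrt 2)) * ‖ψ‖ := by
  set c : ℝ := ∑' j, ‖α j‖ ^ 2
  have hc : 0 ≤ c := tsum_nonneg fun j => sq_nonneg ‖α j‖
  have hconj : ∀ j, ‖(starRingEnd ℂ) (α j)‖ = ‖α j‖ := fun j => RCLike.norm_conj (α j)
  obtain ⟨hsum, hle⟩ := summable_smul_and_norm_tsum_smul_le (a := fun j => (starRingEnd ℂ) (α j))
    (v := v) (by simpa only [hconj] using hα) hv
  simp only [hconj] at hle
  have hd : ∑' j, ‖v j‖ ^ 2 ≤ 2 * ‖ψ‖ * ‖κ + ((c / 2 : ℝ) : ℂ) • ψ‖ - c * ‖ψ‖ ^ 2 := by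
    have hre : (⟪ψ, κ⟫_ℂ).re ≤ ‖ψ‖ * ‖κ + ((c / 2 : ℝ) : ℂ) • ψ‖ - c / 2 * ‖ψ‖ ^ 2 :=
      re_inner_le_norm_mul_norm_add_smul_sub (𝕜 := ℂ) ψ κ (c / 2)
    linarith
  exact ⟨hsum, hle.trans <|
    sqrt_mul_sqrt_le_of_le_two_mul_mul_sub (norm_nonneg _) hc (norm_nonneg _) hd⟩
end
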